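/- arXiv:0804.2663 — 2 statements merged into one kernel-verified Lean document; each statement's English description precedes it below -/
import Mathlib

section
/- In the category of globular sets (presheaves on the globe category 𝔾), the boundary inclusion ι(n+2) : ∂y(n+2) → y(n+2) is characterized by a pushout: ∂y(n+2) is the pushout of y(σ_n), y(τ_n) : y(n) ⇉ y(n+1) along themselves, i.e. the pushout of [y(σ_n), y(τ_n)] : y(n)+y(n) → y(n+1) with itself, and ι(n+2) is induced by y(σ_{n+1}) and y(τ_{n+1}). -/
open CategoryTheory

/-- Morphisms of the globe category `𝔾`: for `m < n` there are exactly two morphisms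
`m ⟶ n` (the source and target inclusions), plus identities. -/
inductive GHom : ℕ → ℕ → Type
  | id : (n : ℕ) → GHom n n
  | sig : {m n : ℕ} → m < n → GHom m n
  | tau : {m n : ℕ} → m < n → GHom m n

/-- Composition in the globe category: by the coglobular relations, the composite of a
non-identity morphism with anything has the type of the first (lowest-dimensional) factor. -/
def GHom.comp : {a b c : ℕ} → GHom a b → GHom b c → GHom a c
  | _, _, _, .id _, g => g
  | _, _, _, .sig h, .id _ => .sig h
  | _, _, _, .sig h, .sig h' => .sig (h.trans h')
  | _, _, _, .sig h, .tau h' => .sig (h.trans h')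
  | _, _, _, .tau h, .id _ => .tau h
  | _, _, _, .tau h, .sig h' => .tau (h.trans h')
  | _, _, _, .tau h, .tau h' => .tau (h.trans h')

theorem GHom.comp_id : ∀ {a b : ℕ} (f : GHom a b), f.comp (GHom.id b) = f := by
  intro a b f
  cases f <;> rfl

theorem GHom.comp_assoc : ∀ {a b c d : ℕ} (f : GHom a b) (g : GHom b c) (h : GHom c d),
    (f.comp g).comp h = f.comp (g.comp h) := by
  intro a b c d f g h
  cases f <;> cases g <;> cases h <;> rfl

/-- Any morphism of `𝔾` weakly increases dimension. -/
theorem GHom.le {m n : ℕ} (f : GHom m n) : m ≤ n := by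
  cases f with
  | id => exact le_refl _
  | sig h => exact h.le
  | tau h => exact h.le

/-- The objects of the globe category `𝔾`. -/
structure Globe where
  dim : ℕ

instance : Category Globe where
  Hom a b := GHom a.dim b.dim
  id a := GHom.id a.dim
  comp f g := f.comp g
  id_comp f := rfl
  comp_id f := GHom.comp_id f
  assoc f g h := GHom.comp_assoc f g h

/-- The cosource map `σ_n : n ⟶ n + 1` in `𝔾`. -/
def sigma' (n : ℕ) : Globe.mk n ⟶ Globe.mk (n + 1) := GHom.sig (Nat.lt_succ_self n)

/-- The cotarget map `τ_n : n ⟶ n + 1` in `𝔾`. -/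
def tau' (n : ℕ) : Globe.mk n ⟶ Globe.mk (n + 1) := GHom.tau (Nat.lt_succ_self n)

/-- The boundary `∂y(m)` of the representable globular set `y(m)`: the subpresheaf of `y(m)`
consisting of the cells of dimension `< m`. -/
def bdry (m : ℕ) : Globeᵒᵖ ⥤ Type where
  obj k := { f : GHom k.unop.dim m // k.unop.dim < m }
  map {k k'} g := TypeCat.ofHom (fun f => ⟨GHom.comp g.unop f.1, lt_of_le_of_lt (GHom.le g.unop) f.2⟩)
  map_id k := by ext f; rfl
  map_comp {k k' k''} g g' := by
    ext f
    exact GHom.comp_assoc g'.unop g.unop f.1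

/-- The boundary inclusion `ι(m) : ∂y(m) ⟶ y(m)`. -/
def bdryIncl (m : ℕ) : bdry m ⟶ yoneda.obj (Globe.mk m) where
  app k := TypeCat.ofHom (fun f => f.1)
  naturality k k' g := rfl

/-- The map `y(n+1) ⟶ ∂y(n+2)` given by postcomposition with `σ_{n+1}`. -/
def sigInto (n : ℕ) : yoneda.obj (Globe.mk (n + 1)) ⟶ bdry (n + 2) where
  app k := TypeCat.ofHom (fun f => ⟨GHom.comp f (sigma' (n + 1)), lt_of_le_of_lt (GHom.le f) (Nat.lt_succ_self _)⟩)
  naturality k k' g := by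
    ext f
    apply Subtype.ext
    exact GHom.comp_assoc g.unop f (sigma' (n + 1))

/-- The map `y(n+1) ⟶ ∂y(n+2)` given by postcomposition with `τ_{n+1}`. -/
def tauInto (n : ℕ) : yoneda.obj (Globe.mk (n + 1)) ⟶ bdry (n + 2) where
  app k := TypeCat.ofHom (fun f => ⟨GHom.comp f (tau' (n + 1)), lt_of_le_of_lt (GHom.le f) (Nat.lt_succ_self _)⟩)
  naturality k k' g := by
    ext f
    apply Subtype.ext
    exact GHom.comp_assoc g.unop f (tau' (n + 1))

/-!
A cell of `∂y(n+2)` is a source or target inclusion `d ⟶ n+2` with `d < n+2`, and it factors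
uniquely through `σ_{n+1}` (resp. `τ_{n+1}`) as a cell of `y(n+1)`. So a map out of `∂y(n+2)` is a
pair `u, v : y(n+1) ⟶ W`, subject only to `u` and `v` agreeing on the cells that lie in both
copies of `y(n+1)`, i.e. on the cells of dimension `≤ n`. Every such cell factors through `σ_n` or
`τ_n`, so this is exactly the condition that `u` and `v` agree after `[y(σ_n), y(τ_n)]`.
-/

namespace GHom

def sigLift {d m : ℕ} (h : d < m + 1) : GHom d m :=
  if hd : d = m then hd ▸ id d else sig (by omega)

def tauLift {d m : ℕ} (h : d < m + 1) : GHom d m :=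
  if hd : d = m then hd ▸ id d else tau (by omega)

theorem sigLift_comp_sigma' {d m : ℕ} (h : d < m + 1) : (sigLift h).comp (sigma' m) = sig h := by
  unfold sigLift
  split
  · subst m; rfl
  · rfl

theorem tauLift_comp_tau' {d m : ℕ} (h : d < m + 1) : (tauLift h).comp (tau' m) = tau h := by
  unfold tauLift
  split
  · subst m; rfl
  · rfl

theorem comp_sigma'_injective {d m : ℕ} :
    Function.Injective (fun x : GHom d m => x.comp (sigma' m)) := by
  intro x y hxy
  cases x <;> cases y <;> cases hxy <;> first | rfl | (exfalso; omega)

theorem comp_tau'_injective {d m : ℕ} :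
    Function.Injective (fun x : GHom d m => x.comp (tau' m)) := by
  intro x y hxy
  cases x <;> cases y <;> cases hxy <;> first | rfl | (exfalso; omega)

theorem sigLift_eq {d m : ℕ} {h : d < m + 1} {x : GHom d m} (hx : x.comp (sigma' m) = sig h) :
    sigLift h = x :=
  comp_sigma'_injective ((sigLift_comp_sigma' h).trans hx.symm)

theorem tauLift_eq {d m : ℕ} {h : d < m + 1} {x : GHom d m} (hx : x.comp (tau' m) = tau h) :
    tauLift h = x :=
  comp_tau'_injective ((tauLift_comp_tau' h).trans hx.symm)

theorem comp_sigma'_eq_comp_tau' {d m : ℕ} (x : GHom d m) (hx : d < m) :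
    x.comp (sigma' m) = x.comp (tau' m) := by
  cases x
  · omega
  all_goals rfl

end GHom

open Limits Opposite

noncomputable abbrev yonedaSigmaTau (n : ℕ) :
    yoneda.obj (Globe.mk n) ⨿ yoneda.obj (Globe.mk n) ⟶ yoneda.obj (Globe.mk (n + 1)) :=
  coprod.desc (yoneda.map (sigma' n)) (yoneda.map (tau' n))

section Descent

variable {n : ℕ} {W : Globeᵒᵖ ⥤ Type} {u v : yoneda.obj (Globe.mk (n + 1)) ⟶ W}

theorem yoneda_map_comp_sigInto {d : ℕ} (f : Globe.mk d ⟶ Globe.mk (n + 1)) (hd : d < n + 1) :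
    yoneda.map f ≫ sigInto n = yoneda.map f ≫ tauInto n := by
  ext k x
  exact Subtype.ext (GHom.comp_sigma'_eq_comp_tau' (x.comp f) ((GHom.le x).trans_lt hd))

theorem yonedaSigmaTau_comp_sigInto :
    yonedaSigmaTau n ≫ sigInto n = yonedaSigmaTau n ≫ tauInto n :=
  coprod.hom_ext
    (by simpa only [coprod.inl_desc_assoc] using yoneda_map_comp_sigInto _ n.lt_succ_self)
    (by simpa only [coprod.inr_desc_assoc] using yoneda_map_comp_sigInto _ n.lt_succ_self)

theorem sigInto_app_sigLift {d : ℕ} (h : d < n + 2) :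
    (sigInto n).app (op ⟨d⟩) (GHom.sigLift h) = ⟨GHom.sig h, h⟩ :=
  Subtype.ext (GHom.sigLift_comp_sigma' h)

theorem tauInto_app_tauLift {d : ℕ} (h : d < n + 2) :
    (tauInto n).app (op ⟨d⟩) (GHom.tauLift h) = ⟨GHom.tau h, h⟩ :=
  Subtype.ext (GHom.tauLift_comp_tau' h)

theorem app_eq_app_of_dim_lt
    (huv : yonedaSigmaTau n ≫ u = yonedaSigmaTau n ≫ v)
    {d : ℕ} (x : GHom d (n + 1)) (hx : d < n + 1) :
    u.app (op ⟨d⟩) x = v.app (op ⟨d⟩) x := by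
  have hσ : yoneda.map (sigma' n) ≫ u = yoneda.map (sigma' n) ≫ v := by
    simpa only [coprod.inl_desc_assoc] using congr(coprod.inl ≫ $huv)
  have hτ : yoneda.map (tau' n) ≫ u = yoneda.map (tau' n) ≫ v := by
    simpa only [coprod.inr_desc_assoc] using congr(coprod.inr ≫ $huv)
  cases x with
  | id => omega
  | sig h =>
    rw [← GHom.sigLift_comp_sigma' h]
    exact types_congr_hom (congr_app hσ (op ⟨d⟩)) (GHom.sigLift h)
  | tau h =>
    rw [← GHom.tauLift_comp_tau' h]
    exact types_congr_hom (congr_app hτ (op ⟨d⟩)) (GHom.tauLift h)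

variable (u v) in
def bdryDescApp : {d : ℕ} → (x : GHom d (n + 2)) → d < n + 2 → W.obj (op ⟨d⟩)
  | _, .sig h, _ => u.app _ (GHom.sigLift h)
  | _, .tau h, _ => v.app _ (GHom.tauLift h)
  | _, .id _, h => absurd h (lt_irrefl _)

theorem bdryDescApp_eq_of_comp_sigma'
    (huv : yonedaSigmaTau n ≫ u = yonedaSigmaTau n ≫ v)
    {d : ℕ} {x : GHom d (n + 1)} {y : GHom d (n + 2)} (hxy : x.comp (sigma' (n + 1)) = y)
    (hy : d < n + 2) : bdryDescApp u v y hy = u.app (op ⟨d⟩) x := by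
  subst hxy
  cases x with
  | tau h =>
    exact (congrArg (v.app _) (GHom.tauLift_eq rfl)).trans (app_eq_app_of_dim_lt huv _ h).symm
  | _ => exact congrArg (u.app _) (GHom.sigLift_eq rfl)

theorem bdryDescApp_eq_of_comp_tau'
    (huv : yonedaSigmaTau n ≫ u = yonedaSigmaTau n ≫ v)
    {d : ℕ} {x : GHom d (n + 1)} {y : GHom d (n + 2)} (hxy : x.comp (tau' (n + 1)) = y)
    (hy : d < n + 2) : bdryDescApp u v y hy = v.app (op ⟨d⟩) x := by
  subst hxy
  cases x with
  | sig h =>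
    exact (congrArg (u.app _) (GHom.sigLift_eq rfl)).trans (app_eq_app_of_dim_lt huv _ h)
  | _ => exact congrArg (v.app _) (GHom.tauLift_eq rfl)

def bdryDesc
    (huv : yonedaSigmaTau n ≫ u = yonedaSigmaTau n ≫ v) : bdry (n + 2) ⟶ W where
  app k := TypeCat.ofHom fun x => bdryDescApp u v x.1 x.2
  naturality k k' g := by
    obtain ⟨⟨d⟩⟩ := k
    ext ⟨x, hx⟩
    change bdryDescApp u v (g.unop.comp x) _ = W.map g (bdryDescApp u v x hx)
    cases x with
    | id => exact (lt_irrefl _ hx).elim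
    | sig h =>
      rw [bdryDescApp_eq_of_comp_sigma' huv (x := g.unop.comp (GHom.sigLift h)) (by
        rw [GHom.comp_assoc, GHom.sigLift_comp_sigma'])]
      exact types_congr_hom (u.naturality g) _
    | tau h =>
      rw [bdryDescApp_eq_of_comp_tau' huv (x := g.unop.comp (GHom.tauLift h)) (by
        rw [GHom.comp_assoc, GHom.tauLift_comp_tau'])]
      exact types_congr_hom (v.naturality g) _

theorem sigInto_comp_bdryDesc
    (huv : yonedaSigmaTau n ≫ u = yonedaSigmaTau n ≫ v) :
    sigInto n ≫ bdryDesc huv = u := by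
  ext k x
  exact bdryDescApp_eq_of_comp_sigma' huv rfl _

theorem tauInto_comp_bdryDesc
    (huv : yonedaSigmaTau n ≫ u = yonedaSigmaTau n ≫ v) :
    tauInto n ≫ bdryDesc huv = v := by
  ext k x
  exact bdryDescApp_eq_of_comp_tau' huv rfl _

theorem bdry_hom_ext {f g : bdry (n + 2) ⟶ W} (hσ : sigInto n ≫ f = sigInto n ≫ g)
    (hτ : tauInto n ≫ f = tauInto n ≫ g) : f = g := by
  ext ⟨⟨d⟩⟩ ⟨x, hx⟩
  cases x with
  | id => exact (lt_irrefl _ hx).elim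
  | sig h =>
    rw [← sigInto_app_sigLift h]
    exact types_congr_hom (congr_app hσ _) _
  | tau h =>
    rw [← tauInto_app_tauLift h]
    exact types_congr_hom (congr_app hτ _) _

end Descent

/-- `∂y(n+2)` is the pushout of `[y(σ_n), y(τ_n)] : y(n) + y(n) → y(n+1)` with itself, and
the boundary inclusion `ι(n+2) : ∂y(n+2) → y(n+2)` is induced by `y(σ_{n+1})` and
`y(τ_{n+1})`. -/
theorem stmt16 (n : ℕ) :
    IsPushout (Limits.coprod.desc (yoneda.map (sigma' n)) (yoneda.map (tau' n)))
        (Limits.coprod.desc (yoneda.map (sigma' n)) (yoneda.map (tau' n)))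
        (sigInto n) (tauInto n) ∧
      sigInto n ≫ bdryIncl (n + 2) = yoneda.map (sigma' (n + 1)) ∧
      tauInto n ≫ bdryIncl (n + 2) = yoneda.map (tau' (n + 1)) := by
  refine ⟨?_, rfl, rfl⟩
  have w : CommSq (yonedaSigmaTau n) (yonedaSigmaTau n) (sigInto n) (tauInto n) :=
    ⟨yonedaSigmaTau_comp_sigInto⟩
  refine IsPushout.of_isColimit' w (PushoutCocone.IsColimit.mk w.w
    (fun s => bdryDesc s.condition) (fun s => ?_) (fun s => ?_) (fun s m hm₁ hm₂ => ?_))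
  · exact sigInto_comp_bdryDesc s.condition
  · exact tauInto_comp_bdryDesc s.condition
  · exact bdry_hom_ext (hm₁.trans (sigInto_comp_bdryDesc s.condition).symm)
      (hm₂.trans (tauInto_comp_bdryDesc s.condition).symm)
end

section
/- For a direct category A (one admitting an identity-reflecting functor dim : A → γ to an ordinal γ), the canonical map ι(a) : ∂y(a) → y(a), from the coend ∂y(a) = ∫^{b : dim b < dim a} A(b,a) · y(b) to the representable y(a), is a monomorphism of presheaves. -/
/-!
An element `(b, g, f)` of `∂y(a)` at stage `c` (with `f : c ⟶ b`, `g : b ⟶ a`) is identified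
by the coend relation, along `h := f`, with `(c, f ≫ g, 𝟙 c)`: since `dim c ≤ dim b < dim a`,
`c` is itself an admissible index. Hence an element is determined by its image `f ≫ g` in
`y(a)`, and `ι(a)` is injective at every stage.
-/

open CategoryTheory

universe u w

variable {A : Type u} [SmallCategory A] {γ : Type w} [LinearOrder γ] [WellFoundedLT γ]

/-- The diagram whose quotient is the coend `∂y(a) = ∫^{b, dim b < dim a} A(b,a) · y(b)`:
at stage `c`, triples `(b, g : b ⟶ a, f : c ⟶ b)` with `dim b < dim a`. -/
def BdryIndex (dim : A ⥤ γ) (a c : A) : Type u :=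
  Σ' (b : A) (_ : dim.obj b < dim.obj a), (c ⟶ b) × (b ⟶ a)

/-- The coend relation: `(b, g, h ≫ f') ~ (b', g ≫ h, f')` for `h : b ⟶ b'`. -/
def BdryRel (dim : A ⥤ γ) (a c : A) : BdryIndex dim a c → BdryIndex dim a c → Prop :=
  fun x y => ∃ h : x.1 ⟶ y.1, x.2.2.1 ≫ h = y.2.2.1 ∧ x.2.2.2 = h ≫ y.2.2.2

/-- The boundary `∂y(a)`, as the coend `∫^{b, dim b < dim a} A(b,a) · y(b)` computed
pointwise as a quotient. -/
def bdryCoend (dim : A ⥤ γ) (a : A) : Aᵒᵖ ⥤ Type u where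
  obj c := Quot (BdryRel dim a c.unop)
  map {c c'} g :=
    TypeCat.ofHom (Quot.map (fun x => ⟨x.1, x.2.1, g.unop ≫ x.2.2.1, x.2.2.2⟩)
      (fun x y hxy => by
        obtain ⟨h, h1, h2⟩ := hxy
        exact ⟨h, by simp [← h1], h2⟩))
  map_id c := by
    ext x
    induction x using Quot.ind with
    | _ x =>
      obtain ⟨b, hb, f, g⟩ := x
      exact congrArg (Quot.mk _) (by simp <;> rfl)
  map_comp {c c' c''} g g' := by
    ext x
    induction x using Quot.ind with
    | _ x =>
      obtain ⟨b, hb, f, g₀⟩ := x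
      exact congrArg (Quot.mk _) (by simp <;> rfl)

/-- The canonical map `ι(a) : ∂y(a) ⟶ y(a)`, sending `(b, g, f)` to `f ≫ g`. -/
def bdryCoendIncl (dim : A ⥤ γ) (a : A) : bdryCoend dim a ⟶ yoneda.obj a where
  app c := TypeCat.ofHom (Quot.lift (fun (x : BdryIndex dim a c.unop) => x.2.2.1 ≫ x.2.2.2)
    (fun x y hxy => by
      obtain ⟨b, hb, f, g⟩ := x
      obtain ⟨b', hb', f', g'⟩ := y
      obtain ⟨h, h1, h2⟩ := hxy
      dsimp at h1 h2 ⊢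
      rw [h2, ← h1, Category.assoc]))
  naturality c c' g := by
    ext x
    induction x using Quot.ind with
    | _ x =>
      obtain ⟨b, hb, f, g₀⟩ := x
      exact Category.assoc _ _ _

omit [WellFoundedLT γ] in
theorem bdryCoend_mk_eq_mk_id (dim : A ⥤ γ) {a c : A} (x : BdryIndex dim a c)
    (hc : dim.obj c < dim.obj a) :
    Quot.mk (BdryRel dim a c) x = Quot.mk _ ⟨c, hc, 𝟙 c, x.2.2.1 ≫ x.2.2.2⟩ :=
  (Quot.sound ⟨x.2.2.1, Category.id_comp _, rfl⟩).symm

omit [WellFoundedLT γ] in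
theorem bdryCoendIncl_app_injective (dim : A ⥤ γ) (a : A) (c : Aᵒᵖ) :
    Function.Injective ((bdryCoendIncl dim a).app c) := by
  rintro ⟨x⟩ ⟨y⟩ hxy
  change x.2.2.1 ≫ x.2.2.2 = y.2.2.1 ≫ y.2.2.2 at hxy
  have hc : dim.obj c.unop < dim.obj a := (dim.map x.2.2.1).le.trans_lt x.2.1
  rw [bdryCoend_mk_eq_mk_id dim x hc, bdryCoend_mk_eq_mk_id dim y hc, hxy]

theorem bdryCoendIncl_mono_general (dim : A ⥤ γ)
    (a : A) : Mono (bdryCoendIncl dim a) := by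
  have (c : Aᵒᵖ) : Mono ((bdryCoendIncl dim a).app c) :=
    (mono_iff_injective _).2 (bdryCoendIncl_app_injective dim a c)
  exact NatTrans.mono_of_mono_app _

/-- For a direct category `A` (with an identity-reflecting functor `dim` to an ordinal `γ`),
the canonical map `ι(a) : ∂y(a) → y(a)` from the coend to the representable is a
monomorphism of presheaves. -/
theorem bdryCoendIncl_mono (dim : A ⥤ γ)
    (hdim : ∀ {b b' : A} (f : b ⟶ b'), dim.obj b = dim.obj b' →
      ∃ h : b = b', f = eqToHom h)
    (a : A) : Mono (bdryCoendIncl dim a) :=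
  bdryCoendIncl_mono_general dim a
end
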